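/- Generalized Stirling numbers satisfy the contiguity relations: (i) S(n,k)(a,b;r+a) = S(n,k)(a,b;r) + a·n·S(n−1,k)(a,b;r), and (ii) S(n,k)(a,b;r+b) = S(n,k)(a,b;r) + b·(k+1)·S(n,k+1)(a,b;r), for all 0 ≤ k ≤ n and rationals a,b,r (with the convention S(m,j)=0 when j<0, j>m, or m<0). -/
import Mathlib


/-- Stirling subset numbers (Stirling numbers of the second kind). -/
def stirling2 : ℕ → ℕ → ℕ
  | 0, 0 => 1
  | 0, _+1 => 0
  | _+1, 0 => 0
  | n+1, k+1 => (k+1) * stirling2 n (k+1) + stirling2 n k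

/-- Generalized Stirling numbers of Hsu and Shiue, S(n,k)(a,b;r). -/
def gS (a b r : ℚ) : ℕ → ℕ → ℚ
  | 0, 0 => 1
  | 0, _+1 => 0
  | n+1, 0 => (-a * n + r) * gS a b r n 0
  | n+1, k+1 => (-a * n + b * (k+1) + r) * gS a b r n (k+1) + gS a b r n k

lemma gS_eq_zero (a b r : ℚ) : ∀ n k, n < k → gS a b r n k = 0 := by
  intro n
  induction n with
  | zero =>
    intro k hk
    match k, hk with
    | k+1, _ => rfl
  | succ n ih =>
    intro k hk
    match k, hk with
    | k+1, hk =>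
      have h1 : n < k + 1 := by omega
      have h2 : n < k := by omega
      simp [gS, ih _ h1, ih _ h2]

lemma gS_aux (a b r : ℚ) : ∀ n k,
    (gS a b (r + a) n k = gS a b r n k + a * n * gS a b r (n - 1) k) ∧
    (gS a b (r + b) n k = gS a b r n k + b * ((k : ℚ) + 1) * gS a b r n (k + 1)) := by
  intro n
  induction n with
  | zero =>
    intro k
    cases k with
    | zero => simp [gS]
    | succ k => simp [gS, gS_eq_zero]
  | succ n ih =>
    intro k
    constructor
    · cases k with
      | zero =>
        cases n with
        | zero => simp [gS]
        | succ m =>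
          have h := (ih 0).1
          simp only [gS, Nat.add_sub_cancel] at h ⊢
          push_cast at h ⊢
          linear_combination (-a*m+r) * h
      | succ k =>
        cases n with
        | zero =>
          rcases k with _ | k <;> simp [gS, gS_eq_zero]
        | succ m =>
          have h1 := (ih (k+1)).1
          have h2 := (ih k).1
          simp only [gS, Nat.add_sub_cancel] at h1 h2 ⊢
          push_cast at h1 h2 ⊢
          linear_combination (-a*m + b*(k+1) + r) * h1 + h2
    · cases k with
      | zero =>
        have h := (ih 0).2
        simp only [gS] at h ⊢
        push_cast at h ⊢
        linear_combination (-a*n + r + b) * h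
      | succ k =>
        have h1 := (ih (k+1)).2
        have h2 := (ih k).2
        simp only [gS] at h1 h2 ⊢
        push_cast at h1 h2 ⊢
        linear_combination (-a*n + b*(k+2) + r) * h1 + h2

theorem gS_contiguity (a b r : ℚ) (n k : ℕ) (hkn : k ≤ n) :
    gS a b (r + a) n k = gS a b r n k + a * (n : ℚ) * gS a b r (n-1) k ∧
    gS a b (r + b) n k = gS a b r n k + b * ((k : ℚ) + 1) * gS a b r n (k+1) := by
  exact gS_aux a b r n k
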